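/- arXiv:2412.10682 — 7 statements merged into one kernel-verified Lean document; each statement's English description precedes it below -/
import Mathlib

section
/- A function f : (k+1)^V → ℝ is k-submodular (i.e., f(x) + f(y) ≥ f(x ⊔ y) + f(x ⊓ y) for all x, y) if and only if f is both orthant submodular and pairwise monotone. -/
/-!
Evaluating the `k`-submodular inequality on `(x[e ↦ i], y)` with `x ⪯ y`, `y e = 0`, and on
`(x[e ↦ i], x[e ↦ j])`, gives orthant submodularity and pairwise monotonicity.

Conversely, the inequality `f (x ⊔ y) + f (x ⊓ y) ≤ f x + f y` is proved by removing the
disagreements of `x` and `y` one coordinate at a time. Where exactly one of `x e`, `y e` vanishes,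
filling the zero in leaves `x ⊔ y` unchanged and adds `e` to `x ⊓ y`, and orthant submodularity at
`x ⊓ y ⪯ x` compares the two gains. Once `x` and `y` have the same support, `x ⊔ y = x ⊓ y`, and
the remaining (conflicting) coordinates are handled using pairwise monotonicity as well.
-/

namespace Stmt0

variable {V : Type*}

/-- Marginal gain `Δ_{e,i} f(x) = f(x[e↦i]) − f(x)`. -/
def marg {k : ℕ} [DecidableEq V] (f : (V → Fin (k+1)) → ℝ)
    (x : V → Fin (k+1)) (e : V) (i : Fin (k+1)) : ℝ :=
  f (Function.update x e i) - f x

/-- `x ⪯ y` : `y` agrees with `x` on the support of `x`. -/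
def preceq {k : ℕ} (x y : V → Fin (k+1)) : Prop :=
  ∀ e, x e ≠ 0 → y e = x e

def OrthantSubmodular {k : ℕ} [DecidableEq V] (f : (V → Fin (k+1)) → ℝ) : Prop :=
  ∀ x y : V → Fin (k+1), preceq x y → ∀ e, y e = 0 → ∀ i : Fin (k+1), i ≠ 0 →
    marg f x e i ≥ marg f y e i

def PairwiseMonotone {k : ℕ} [DecidableEq V] (f : (V → Fin (k+1)) → ℝ) : Prop :=
  ∀ x : V → Fin (k+1), ∀ e, x e = 0 → ∀ i j : Fin (k+1), i ≠ 0 → j ≠ 0 → i ≠ j →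
    marg f x e i + marg f x e j ≥ 0

/-- `(x ⊓ y)(e) = x(e)` if `x(e) = y(e)` and `0` otherwise. -/
def kinf {k : ℕ} (x y : V → Fin (k+1)) : V → Fin (k+1) :=
  fun e => if x e = y e then x e else 0

/-- `(x ⊔ y)(e) = x(e)` if `y(e) ∈ {0, x(e)}`; `= y(e)` if `x(e) = 0 ≠ y(e)`;
`= 0` if `x(e), y(e)` are distinct and both nonzero. -/
def ksup {k : ℕ} (x y : V → Fin (k+1)) : V → Fin (k+1) :=
  fun e => if y e = 0 ∨ y e = x e then x e else if x e = 0 then y e else 0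

def KSubmodular {k : ℕ} (f : (V → Fin (k+1)) → ℝ) : Prop :=
  ∀ x y : V → Fin (k+1), f x + f y ≥ f (ksup x y) + f (kinf x y)

open Function

section Lattice

variable {k : ℕ} (x y : V → Fin (k+1))

theorem ksup_comm : ksup x y = ksup y x := by
  funext e
  simp only [ksup]
  split_ifs <;> grind

theorem kinf_comm : kinf x y = kinf y x := by
  funext e
  simp only [kinf]
  split_ifs <;> grind

theorem kinf_self : kinf x x = x := by
  funext e
  simp [kinf]

theorem kinf_preceq_left : preceq (kinf x y) x := by
  intro e he
  simp only [kinf] at he ⊢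
  split_ifs at he ⊢ <;> grind

theorem ksup_eq_kinf_of_zero_iff (h : ∀ e, x e = 0 ↔ y e = 0) : ksup x y = kinf x y := by
  funext e
  simp only [ksup, kinf]
  split_ifs <;> grind

variable [DecidableEq V] {x y} {e : V}

theorem preceq_update_zero_of_ne (h : x e ≠ y e) : preceq (kinf x y) (update y e 0) := by
  intro e' he'
  rcases eq_or_ne e' e with rfl | hne
  · simp [kinf, h] at he'
  · simp only [kinf, update_of_ne hne] at he' ⊢
    split_ifs at he' ⊢ <;> grind

theorem ksup_update_left_of_preceq (hxy : preceq x y) (hye : y e = 0) (i : Fin (k+1)) :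
    ksup (update x e i) y = update y e i := by
  funext e'
  rcases eq_or_ne e' e with rfl | hne
  · simp [ksup, hye]
  · have := hxy e'
    simp only [ksup, update_of_ne hne]
    split_ifs <;> grind

theorem kinf_update_left_of_preceq (hxy : preceq x y) (hye : y e = 0) {i : Fin (k+1)}
    (hi : i ≠ 0) : kinf (update x e i) y = x := by
  funext e'
  have := hxy e'
  rcases eq_or_ne e' e with rfl | hne
  · simp only [kinf, update_self, hye, hi, if_false]
    grind
  · simp only [kinf, update_of_ne hne]
    split_ifs <;> grind

theorem ksup_update_update (hxe : x e = 0) {i j : Fin (k+1)} (hi : i ≠ 0) (hj : j ≠ 0)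
    (hij : i ≠ j) : ksup (update x e i) (update x e j) = x := by
  funext e'
  rcases eq_or_ne e' e with rfl | hne
  · simp [ksup, hi, hj, hij.symm, hxe]
  · simp [ksup, update_of_ne hne]

theorem kinf_update_update (hxe : x e = 0) {i j : Fin (k+1)} (hij : i ≠ j) :
    kinf (update x e i) (update x e j) = x := by
  funext e'
  rcases eq_or_ne e' e with rfl | hne
  · simp [kinf, hij, hxe]
  · simp [kinf, update_of_ne hne]

theorem ksup_update_left_of_eq_zero (hx : x e = 0) : ksup (update x e (y e)) y = ksup x y := by
  funext e'
  rcases eq_or_ne e' e with rfl | hne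
  · simp [ksup, hx]
  · simp [ksup, update_of_ne hne]

theorem kinf_update_left : kinf (update x e (y e)) y = update (kinf x y) e (y e) := by
  funext e'
  rcases eq_or_ne e' e with rfl | hne
  · simp [kinf]
  · simp [kinf, update_of_ne hne]

theorem kinf_update_right : kinf x (update y e (x e)) = update (kinf x y) e (x e) := by
  rw [kinf_comm, kinf_update_left, kinf_comm]

end Lattice

section Characterization

variable {k : ℕ} [DecidableEq V] {f : (V → Fin (k+1)) → ℝ}

theorem KSubmodular.orthantSubmodular (h : KSubmodular f) : OrthantSubmodular f := by
  intro x y hxy e hye i hi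
  have := h (update x e i) y
  rw [ksup_update_left_of_preceq hxy hye, kinf_update_left_of_preceq hxy hye hi] at this
  simp only [marg]
  linarith

theorem KSubmodular.pairwiseMonotone (h : KSubmodular f) : PairwiseMonotone f := by
  intro x e hxe i j hi hj hij
  have := h (update x e i) (update x e j)
  rw [ksup_update_update hxe hi hj hij, kinf_update_update hxe hij] at this
  simp only [marg]
  linarith

variable {x y : V → Fin (k+1)} {e : V}

theorem OrthantSubmodular.ksup_add_kinf_le_add_of_update (hOS : OrthantSubmodular f)
    (hx : x e = 0) (hy : y e ≠ 0)
    (h : f (ksup (update x e (y e)) y) + f (kinf (update x e (y e)) y) ≤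
      f (update x e (y e)) + f y) :
    f (ksup x y) + f (kinf x y) ≤ f x + f y := by
  rw [ksup_update_left_of_eq_zero hx, kinf_update_left] at h
  have := hOS (kinf x y) x (kinf_preceq_left x y) e hx (y e) hy
  simp only [marg] at this
  linarith

-- Overwriting a conflicting coordinate `e` of `y` by `x e` removes a disagreement; orthant
-- submodularity at `kinf x y ⪯ y[e ↦ 0]` and pairwise monotonicity at `y[e ↦ 0]` pay for it.
theorem two_mul_kinf_le_add_of_zero_iff (hOS : OrthantSubmodular f) (hPM : PairwiseMonotone f)
    (s : Finset V) (x y : V → Fin (k+1)) (hsupp : ∀ e, x e = 0 ↔ y e = 0)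
    (hxy : ∀ e ∉ s, x e = y e) : 2 * f (kinf x y) ≤ f x + f y := by
  induction s using Finset.induction_on generalizing y with
  | empty =>
    obtain rfl : x = y := funext fun e => hxy e (Finset.notMem_empty e)
    rw [kinf_self]
    linarith
  | insert e s he ih =>
    have hs (e' : V) (he' : e' ∉ s) (hne : e' ≠ e) : x e' = y e' :=
      hxy e' (by simp [hne, he'])
    by_cases hxye : x e = y e
    · refine ih y hsupp fun e' he' => ?_
      rcases eq_or_ne e' e with rfl | hne
      · exact hxye
      · exact hs e' he' hne
    have hx : x e ≠ 0 := fun h => hxye (h.trans ((hsupp e).1 h).symm)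
    have hy : y e ≠ 0 := fun h => hxye (((hsupp e).2 h).trans h.symm)
    have hIH := ih (update y e (x e))
      (fun e' => by
        rcases eq_or_ne e' e with rfl | hne
        · simp
        · simp [update_of_ne hne, hsupp e'])
      (fun e' he' => by
        rcases eq_or_ne e' e with rfl | hne
        · simp
        · simp [update_of_ne hne, hs e' he' hne])
    rw [kinf_update_right] at hIH
    have hzero : update y e 0 e = 0 := update_self ..
    have hOS' := hOS _ _ (preceq_update_zero_of_ne hxye) e hzero (x e) hx
    have hPM' := hPM _ e hzero (x e) (y e) hx hy hxye
    simp only [marg, update_idem, update_eq_self] at hOS' hPM'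
    linarith

theorem ksup_add_kinf_le_add_of_zero_iff [Fintype V] (hOS : OrthantSubmodular f)
    (hPM : PairwiseMonotone f) (s : Finset V) (x y : V → Fin (k+1))
    (hsupp : ∀ e ∉ s, (x e = 0 ↔ y e = 0)) :
    f (ksup x y) + f (kinf x y) ≤ f x + f y := by
  induction s using Finset.induction_on generalizing x y with
  | empty =>
    have hsupp' (e : V) : x e = 0 ↔ y e = 0 := hsupp e (Finset.notMem_empty e)
    rw [ksup_eq_kinf_of_zero_iff x y hsupp', ← two_mul]
    exact two_mul_kinf_le_add_of_zero_iff hOS hPM Finset.univ x y hsupp' (by simp)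
  | insert e s he ih =>
    have hs (e' : V) (he' : e' ∉ s) (hne : e' ≠ e) : x e' = 0 ↔ y e' = 0 :=
      hsupp e' (by simp [hne, he'])
    by_cases hxy : x e = 0 ↔ y e = 0
    · refine ih x y fun e' he' => ?_
      rcases eq_or_ne e' e with rfl | hne
      · exact hxy
      · exact hs e' he' hne
    by_cases hx : x e = 0
    · have hy : y e ≠ 0 := fun hy => hxy (iff_of_true hx hy)
      refine hOS.ksup_add_kinf_le_add_of_update hx hy (ih _ y fun e' he' => ?_)
      rcases eq_or_ne e' e with rfl | hne
      · simp
      · simp [update_of_ne hne, hs e' he' hne]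
    · have hy : y e = 0 := by_contra fun hy => hxy (iff_of_false hx hy)
      rw [ksup_comm, kinf_comm, add_comm (f x)]
      refine hOS.ksup_add_kinf_le_add_of_update hy hx (ih _ x fun e' he' => ?_)
      rcases eq_or_ne e' e with rfl | hne
      · simp
      · simp [update_of_ne hne, hs e' he' hne]

end Characterization

theorem stmt0_general {k : ℕ} [Fintype V] [DecidableEq V]
    (f : (V → Fin (k+1)) → ℝ) :
    KSubmodular f ↔ OrthantSubmodular f ∧ PairwiseMonotone f :=
  ⟨fun h => ⟨h.orthantSubmodular, h.pairwiseMonotone⟩, fun ⟨hOS, hPM⟩ x y =>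
    ksup_add_kinf_le_add_of_zero_iff hOS hPM Finset.univ x y (by simp)⟩

/-- A function `f : (k+1)^V → ℝ` is `k`-submodular iff it is orthant submodular
and pairwise monotone. -/
theorem stmt0 {k : ℕ} (hk : 1 ≤ k) [Fintype V] [DecidableEq V]
    (f : (V → Fin (k+1)) → ℝ) :
    KSubmodular f ↔ OrthantSubmodular f ∧ PairwiseMonotone f :=
  stmt0_general f

end Stmt0
end

section
/- Let k ≥ 2, ε ≥ 0, and let ŷ, â ∈ ℝ^k satisfy: ŷ_1 ≥ ŷ_2 ≥ … ≥ ŷ_k; ŷ_i + ŷ_ج ≥ −4ε and â_i + â_j ≥ −4ε for all i ≠ j; and ŷ_i ≥ â_i − 4ε for all i. Let i⁺ = max{i : ŷ_i > 0} (with i⁺ = 0 if ŷ_1 ≤ 0). Define p ∈ ℝ^k as follows: if i⁺ ≤ 1 then p_1 = 1 and p_i = 0 for i > 1; if i⁺ = 2 then p_i = ŷ_i/(ŷ_1 + ŷ_2) for i ∈ {1,2} and p_i = 0 otherwise; if i⁺ ≥ 3 then p_i = (1/2)^i for 1 ≤ i ≤ i⁺−1, p_{i⁺} = (1/2)^{i⁺−1},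 and p_i = 0 for i > i⁺. Then for every i* ∈ {1,…,k}: Σ_{i=1}^k (ŷ_i + â_i) p_i ≥ â_{i*} − 14ε. -/
namespace Stmt2


private lemma geo (n : ℕ) : ∑ i ∈ Finset.Ioc 0 n, ((1:ℝ)/2)^i = 1 - (1/2)^n := by
  induction n with
  | zero => simp
  | succ n ih =>
    rw [Finset.sum_Ioc_succ_top (Nat.zero_le _), ih]
    ring

private noncomputable def qq (m i : ℕ) : ℝ :=
  if i ≤ m - 1 then (1/2)^i else if i = m then (1/2)^(m-1) else 0

private lemma qq_nonneg (m i : ℕ) : 0 ≤ qq m i := by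
  unfold qq; split_ifs <;> positivity

private lemma qq_zero (m i : ℕ) (h : m < i) : qq m i = 0 := by
  unfold qq; rw [if_neg (by omega), if_neg (by omega)]

private lemma qq_sum_lt (m n : ℕ) (hn : n ≤ m - 1) :
    ∑ i ∈ Finset.Ioc 0 n, qq m i = 1 - (1/2:ℝ)^n := by
  rw [← geo n]
  refine Finset.sum_congr rfl fun i hi => ?_
  have hi' := Finset.mem_Ioc.mp hi
  unfold qq; rw [if_pos (by omega)]

private lemma qq_sum (m : ℕ) (hm : 1 ≤ m) :
    ∑ i ∈ Finset.Ioc 0 m, qq m i = 1 := by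
  obtain ⟨n, rfl⟩ : ∃ n, m = n + 1 := ⟨m - 1, by omega⟩
  rw [Finset.sum_Ioc_succ_top (Nat.zero_le _), qq_sum_lt (n+1) n (by omega)]
  have h2 : qq (n+1) (n+1) = (1/2:ℝ)^n := by
    unfold qq; rw [if_neg (by omega), if_pos rfl, Nat.add_sub_cancel]
  rw [h2]; ring

private lemma qq_le_half (m i : ℕ) (hm : 3 ≤ m) (hi : 1 ≤ i) : qq m i ≤ 1/2 := by
  unfold qq; split_ifs with h1 h2
  · calc ((1:ℝ)/2)^i ≤ ((1:ℝ)/2)^1 := pow_le_pow_of_le_one (by norm_num) (by norm_num) hi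
    _ = 1/2 := by norm_num
  · calc ((1:ℝ)/2)^(m-1) ≤ ((1:ℝ)/2)^1 := pow_le_pow_of_le_one (by norm_num) (by norm_num) (by omega)
    _ = 1/2 := by norm_num
  · norm_num

private lemma qq_le_quarter (m i : ℕ) (hm : 3 ≤ m) (hi : 2 ≤ i) : qq m i ≤ 1/4 := by
  unfold qq; split_ifs with h1 h2
  · calc ((1:ℝ)/2)^i ≤ ((1:ℝ)/2)^2 := pow_le_pow_of_le_one (by norm_num) (by norm_num) hi
    _ = 1/4 := by norm_num
  · calc ((1:ℝ)/2)^(m-1) ≤ ((1:ℝ)/2)^2 := pow_le_pow_of_le_one (by norm_num) (by norm_num) (by omega)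
    _ = 1/4 := by norm_num
  · norm_num

private lemma qq_one (m : ℕ) (hm : 3 ≤ m) : qq m 1 = 1/2 := by
  unfold qq; rw [if_pos (by omega)]; norm_num

set_option maxHeartbeats 2000000

/-- Robustness inequality for the randomized algorithm for unconstrained
non-monotone `k`-submodular maximization: with the probability weights `p`
determined by `i⁺ = max {i : ŷ_i > 0}`, one has
`Σ_{i=1}^k (ŷ_i + â_i) p_i ≥ â_{i*} − 14ε`. -/
theorem stmt2 (k : ℕ) (hk : 2 ≤ k) (ε : ℝ) (hε : 0 ≤ ε) (y a : ℕ → ℝ)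
    (hord : ∀ i ∈ Finset.Icc 1 k, ∀ j ∈ Finset.Icc 1 k, i ≤ j → y j ≤ y i)
    (hpy : ∀ i ∈ Finset.Icc 1 k, ∀ j ∈ Finset.Icc 1 k, i ≠ j →
      y i + y j ≥ -(4 * ε))
    (hpa : ∀ i ∈ Finset.Icc 1 k, ∀ j ∈ Finset.Icc 1 k, i ≠ j →
      a i + a j ≥ -(4 * ε))
    (hya : ∀ i ∈ Finset.Icc 1 k, y i ≥ a i - 4 * ε)
    -- `iplus = max {i ∈ {1,…,k} : y i > 0}`, with `iplus = 0` if `y 1 ≤ 0`: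
    (iplus : ℕ) (hiplus : iplus ≤ k)
    (hiplusc : ∀ i ∈ Finset.Icc 1 k, (0 < y i ↔ i ≤ iplus))
    -- the probability weights:
    (p : ℕ → ℝ)
    (hp : ∀ i ∈ Finset.Icc 1 k, p i =
      if iplus ≤ 1 then (if i = 1 then (1 : ℝ) else 0)
      else if iplus = 2 then (if i = 1 ∨ i = 2 then y i / (y 1 + y 2) else 0)
      else (if i ≤ iplus - 1 then (1/2 : ℝ)^i
            else if i = iplus then (1/2 : ℝ)^(iplus - 1) else 0))
    (istar : ℕ) (histar : istar ∈ Finset.Icc 1 k) :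
    ∑ i ∈ Finset.Icc 1 k, (y i + a i) * p i ≥ a istar - 14 * ε := by
  obtain ⟨histar1, histark⟩ := Finset.mem_Icc.mp histar
  have h1k : (1:ℕ) ∈ Finset.Icc 1 k := Finset.mem_Icc.mpr ⟨le_refl _, by omega⟩
  have h2k : (2:ℕ) ∈ Finset.Icc 1 k := Finset.mem_Icc.mpr ⟨by omega, hk⟩
  have hup : ∀ i ∈ Finset.Icc 1 k, a i ≤ y i + 4*ε := by
    intro i hi; have := hya i hi; linarith
  rcases le_or_gt iplus 1 with hm1 | hm2
  · -- CASE iplus ≤ 1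
    have hsum : ∑ i ∈ Finset.Icc 1 k, (y i + a i) * p i = y 1 + a 1 := by
      rw [Finset.sum_eq_single_of_mem 1 h1k]
      · rw [hp 1 h1k]; simp [hm1]
      · intro b hb hb1
        rw [hp b hb, if_pos hm1, if_neg hb1, mul_zero]
    rw [hsum]
    have hy1 : -(2*ε) ≤ y 1 := by
      rcases Nat.lt_or_ge iplus 1 with h0 | h1
      · have h0' : iplus = 0 := by omega
        have hy12 : y 2 ≤ y 1 := hord 1 h1k 2 h2k (by omega)
        have := hpy 1 h1k 2 h2k (by omega)
        linarith
      · have : 0 < y 1 := (hiplusc 1 h1k).mpr (by omega)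
        linarith
    rcases eq_or_ne istar 1 with rfl | hne
    · have := hup 1 h1k; linarith
    · have hys : ¬ (0 < y istar) := by
        rw [hiplusc istar histar]; omega
      have hys' : y istar ≤ 0 := le_of_not_gt hys
      have haist : a istar ≤ y istar + 4*ε := hup istar histar
      have ha1 : a 1 + a istar ≥ -(4*ε) := hpa 1 h1k istar histar (Ne.symm hne)
      linarith
  · rcases eq_or_lt_of_le (show 2 ≤ iplus from hm2) with hm2' | hm3
    · -- CASE iplus = 2
      have hm2'' : iplus = 2 := hm2'.symm
      subst hm2''
      have hy1 : 0 < y 1 := (hiplusc 1 h1k).mpr (by omega)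
      have hy2 : 0 < y 2 := (hiplusc 2 h2k).mpr (by omega)
      have hy12 : y 2 ≤ y 1 := hord 1 h1k 2 h2k (by omega)
      have hs : 0 < y 1 + y 2 := by linarith
      have hsub : Finset.Icc 1 2 ⊆ Finset.Icc 1 k := Finset.Icc_subset_Icc_right hk
      have hsum : ∑ i ∈ Finset.Icc 1 k, (y i + a i) * p i
          = (y 1 + a 1) * (y 1 / (y 1 + y 2)) + (y 2 + a 2) * (y 2 / (y 1 + y 2)) := by
        rw [← Finset.sum_subset hsub]
        · have h12 : Finset.Icc 1 2 = ({1, 2} : Finset ℕ) := by decide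
          rw [h12, Finset.sum_pair (by norm_num)]
          rw [hp 1 h1k, hp 2 h2k]
          norm_num
        · intro i hi hni
          obtain ⟨hi1, hik⟩ := Finset.mem_Icc.mp hi
          have hi3 : 3 ≤ i := by
            simp only [Finset.mem_Icc] at hni; omega
          rw [hp i hi, if_neg (by omega), if_pos rfl, if_neg (by omega), mul_zero]
      rw [hsum, ge_iff_le, ← sub_nonneg]
      have key : (y 1 + a 1) * (y 1 / (y 1 + y 2)) + (y 2 + a 2) * (y 2 / (y 1 + y 2))
          - (a istar - 14 * ε)
          = ((y 1 + a 1) * y 1 + (y 2 + a 2) * y 2 - (a istar - 14*ε) * (y 1 + y 2)) / (y 1 + y 2) := by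
        field_simp
      rw [key]
      apply div_nonneg _ hs.le
      have ha1u : a 1 ≤ y 1 + 4*ε := hup 1 h1k
      have ha2u : a 2 ≤ y 2 + 4*ε := hup 2 h2k
      have ha12 : a 1 + a 2 ≥ -(4*ε) := hpa 1 h1k 2 h2k (by omega)
      rcases eq_or_ne istar 1 with rfl | hne1
      · nlinarith [sq_nonneg (y 1 - y 2), mul_nonneg hy2.le (by linarith : (0:ℝ) ≤ a 2 - a 1 + 2*y 1 + 12*ε), mul_nonneg hε hy1.le, mul_nonneg hε hy2.le]
      rcases eq_or_ne istar 2 with rfl | hne2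
      · nlinarith [sq_nonneg (y 1 - y 2), mul_nonneg hy1.le (by linarith : (0:ℝ) ≤ a 1 - a 2 + 2*y 2 + 12*ε), mul_nonneg hε hy1.le, mul_nonneg hε hy2.le]
      · have hys : ¬ (0 < y istar) := by rw [hiplusc istar histar]; omega
        have hys' : y istar ≤ 0 := le_of_not_gt hys
        have haiu : a istar ≤ y istar + 4*ε := hup istar histar
        have ha1l : a 1 + a istar ≥ -(4*ε) := hpa 1 h1k istar histar (Ne.symm hne1)
        have ha2l : a 2 + a istar ≥ -(4*ε) := hpa 2 h2k istar histar (Ne.symm hne2)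
        nlinarith [mul_nonneg hy1.le (by linarith : (0:ℝ) ≤ a 1 + 8*ε), mul_nonneg hy2.le (by linarith : (0:ℝ) ≤ a 2 + 8*ε), mul_nonneg (by linarith : (0:ℝ) ≤ 4*ε - a istar) hs.le, mul_nonneg hε hs.le, sq_nonneg (y 1), sq_nonneg (y 2)]
    · -- CASE iplus ≥ 3
      have hm3' : 3 ≤ iplus := hm3
      set m := iplus with hmdef
      have hm1 : 1 ≤ m := by omega
      have hmk : m ∈ Finset.Icc 1 k := Finset.mem_Icc.mpr ⟨hm1, hiplus⟩
      have hsub : Finset.Ioc 0 m ⊆ Finset.Icc 1 k := by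
        intro i hi
        obtain ⟨hi0, him⟩ := Finset.mem_Ioc.mp hi
        exact Finset.mem_Icc.mpr ⟨hi0, le_trans him hiplus⟩
      have hpq : ∀ i ∈ Finset.Icc 1 k, p i = qq m i := by
        intro i hi
        rw [hp i hi, if_neg (by omega), if_neg (by omega)]
        rfl
      have hT : ∑ i ∈ Finset.Icc 1 k, (y i + a i) * p i
          = ∑ i ∈ Finset.Ioc 0 m, (y i + a i) * qq m i := by
        rw [← Finset.sum_subset hsub]
        · exact Finset.sum_congr rfl fun i hi => by rw [hpq i (hsub hi)]
        · intro i hi hni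
          obtain ⟨hi1, hik⟩ := Finset.mem_Icc.mp hi
          have him : m < i := by
            simp only [Finset.mem_Ioc] at hni; omega
          rw [hpq i hi, qq_zero m i him, mul_zero]
      rw [hT]
      have hypos : ∀ i ∈ Finset.Ioc 0 m, 0 < y i := by
        intro i hi
        obtain ⟨hi0, him⟩ := Finset.mem_Ioc.mp hi
        exact (hiplusc i (hsub hi)).mpr him
      rcases le_or_gt istar m with histm | histm
      · -- i* ≤ m
        have histmem : istar ∈ Finset.Ioc 0 m := Finset.mem_Ioc.mpr ⟨by omega, histm⟩
        have hyistar : 0 < y istar := (hiplusc istar histar).mpr histm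
        have hymle : y m ≤ y istar := hord istar histar m hmk histm
        have hympos : 0 < y m := (hiplusc m hmk).mpr le_rfl
        have hu : a istar ≤ y istar + 4*ε := hup istar histar
        set S := ∑ i ∈ Finset.Ioc 0 istar, qq m i with hSdef
        have hS_le : S ≤ 1 := by
          rw [hSdef, ← qq_sum m hm1]
          exact Finset.sum_le_sum_of_subset_of_nonneg
            (Finset.Ioc_subset_Ioc_right histm) (fun i _ _ => qq_nonneg m i)
        have hS_ge : 1 - qq m istar ≤ S := by
          rcases lt_or_eq_of_le histm with hlt | heq
          · have h1 : S = 1 - (1/2:ℝ)^istar := qq_sum_lt m istar (by omega)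
            have h2 : qq m istar = (1/2:ℝ)^istar := by
              unfold qq; rw [if_pos (by omega)]
            rw [h1, h2]
          · subst heq
            rw [hSdef, qq_sum istar hm1]
            have := qq_nonneg istar istar
            linarith
        set c : ℕ → ℝ := fun i => if i ≤ istar then y istar else y m with hc
        have hC_eq : ∑ i ∈ Finset.Ioc 0 m, c i * qq m i = y istar * S + y m * (1 - S) := by
          rw [← Finset.sum_Ioc_consecutive _ (Nat.zero_le istar) histm]
          have A1 : ∑ i ∈ Finset.Ioc 0 istar, c i * qq m i = y istar * S := by
            rw [hSdef, Finset.mul_sum]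
            refine Finset.sum_congr rfl fun i hi => ?_
            obtain ⟨_, hile⟩ := Finset.mem_Ioc.mp hi
            simp only [hc, if_pos hile]
          have hrest : ∑ i ∈ Finset.Ioc istar m, qq m i = 1 - S := by
            have := Finset.sum_Ioc_consecutive (qq m) (Nat.zero_le istar) histm
            rw [qq_sum m hm1] at this
            rw [hSdef]; linarith
          have A2 : ∑ i ∈ Finset.Ioc istar m, c i * qq m i = y m * (1 - S) := by
            rw [← hrest, Finset.mul_sum]
            refine Finset.sum_congr rfl fun i hi => ?_
            obtain ⟨hilt, _⟩ := Finset.mem_Ioc.mp hi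
            simp only [hc, if_neg (by omega : ¬ i ≤ istar)]
          rw [A1, A2]
        have hcy : ∀ i ∈ Finset.Ioc 0 m, c i ≤ y i := by
          intro i hi
          obtain ⟨hi0, him⟩ := Finset.mem_Ioc.mp hi
          simp only [hc]
          split_ifs with h
          · exact hord i (hsub hi) istar histar h
          · exact hord i (hsub hi) m hmk him
        have hCge : y istar * (1 - qq m istar) + y m * qq m istar
            ≤ ∑ i ∈ Finset.Ioc 0 m, c i * qq m i := by
          rw [hC_eq]
          nlinarith [mul_nonneg (by linarith : (0:ℝ) ≤ y istar - y m)
            (by linarith : (0:ℝ) ≤ S - (1 - qq m istar))]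
        have hqistar0 : 0 ≤ qq m istar := qq_nonneg m istar
        have hqistarh : qq m istar ≤ 1/2 := qq_le_half m istar hm3' histar1
        by_cases hBI : ∀ i ∈ Finset.Ioc 0 m, i ≠ istar → -(2*ε) ≤ a i
        · -- case B-I
          rw [ge_iff_le, ← Finset.add_sum_erase _ _ histmem]
          have hbound : ∑ i ∈ (Finset.Ioc 0 m).erase istar, (c i + -(2*ε)) * qq m i
              ≤ ∑ i ∈ (Finset.Ioc 0 m).erase istar, (y i + a i) * qq m i := by
            refine Finset.sum_le_sum fun i hi => ?_
            obtain ⟨hine, hiIoc⟩ := Finset.mem_erase.mp hi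
            exact mul_le_mul_of_nonneg_right
              (add_le_add (hcy i hiIoc) (hBI i hiIoc hine)) (qq_nonneg m i)
          have heval : ∑ i ∈ (Finset.Ioc 0 m).erase istar, (c i + -(2*ε)) * qq m i
              = (y istar * S + y m * (1 - S)) + -(2*ε) - (y istar + -(2*ε)) * qq m istar := by
            rw [Finset.sum_erase_eq_sub histmem]
            have e0 : ∑ i ∈ Finset.Ioc 0 m, (c i + -(2*ε)) * qq m i
                = (y istar * S + y m * (1 - S)) + -(2*ε) := by
              rw [Finset.sum_congr rfl (fun i _ => add_mul (c i) (-(2*ε)) (qq m i)),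
                Finset.sum_add_distrib, hC_eq, ← Finset.mul_sum, qq_sum m hm1, mul_one]
            rw [e0]
            have : c istar = y istar := by simp [hc]
            rw [this]
          nlinarith [hbound, heval, hCge,
            mul_nonneg (by linarith : (0:ℝ) ≤ y istar + 4*ε - a istar)
              (by linarith : (0:ℝ) ≤ 1 - qq m istar),
            mul_nonneg hympos.le hqistar0, mul_nonneg hε hqistar0]
        · -- case B-II
          push_neg at hBI
          obtain ⟨j0, hj0Ioc, hj0ne, hj0lt⟩ := hBI
          obtain ⟨hj00, hj0m⟩ := Finset.mem_Ioc.mp hj0Ioc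
          have hj0k : j0 ∈ Finset.Icc 1 k := hsub hj0Ioc
          have hj0s1 : j0 ∈ (Finset.Ioc 0 m).erase istar := Finset.mem_erase.mpr ⟨hj0ne, hj0Ioc⟩
          have haistlb : a j0 + a istar ≥ -(4*ε) := hpa j0 hj0k istar histar hj0ne
          set d : ℝ := -(4*ε) - a j0 with hd
          have hdi : ∀ i ∈ Finset.Icc 1 k, i ≠ j0 → d ≤ a i := by
            intro i hi hine
            have := hpa i hi j0 hj0k hine
            rw [hd]; linarith
          rw [ge_iff_le, ← Finset.add_sum_erase _ _ histmem, ← Finset.add_sum_erase _ _ hj0s1]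
          have hbound : ∑ i ∈ ((Finset.Ioc 0 m).erase istar).erase j0, (c i + d) * qq m i
              ≤ ∑ i ∈ ((Finset.Ioc 0 m).erase istar).erase j0, (y i + a i) * qq m i := by
            refine Finset.sum_le_sum fun i hi => ?_
            obtain ⟨hinej, hi'⟩ := Finset.mem_erase.mp hi
            obtain ⟨hinei, hiIoc⟩ := Finset.mem_erase.mp hi'
            exact mul_le_mul_of_nonneg_right
              (add_le_add (hcy i hiIoc) (hdi i (hsub hiIoc) hinej)) (qq_nonneg m i)
          have heval : ∑ i ∈ ((Finset.Ioc 0 m).erase istar).erase j0, (c i + d) * qq m i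
              = (y istar * S + y m * (1 - S)) + d - (y istar + d) * qq m istar
                - (c j0 + d) * qq m j0 := by
            rw [Finset.sum_erase_eq_sub hj0s1, Finset.sum_erase_eq_sub histmem]
            have e0 : ∑ i ∈ Finset.Ioc 0 m, (c i + d) * qq m i
                = (y istar * S + y m * (1 - S)) + d := by
              rw [Finset.sum_congr rfl (fun i _ => add_mul (c i) d (qq m i)),
                Finset.sum_add_distrib, hC_eq, ← Finset.mul_sum, qq_sum m hm1, mul_one]
            rw [e0]
            have : c istar = y istar := by simp [hc]
            rw [this]
          have hfj0 : (c j0 + a j0) * qq m j0 ≤ (y j0 + a j0) * qq m j0 :=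
            mul_le_mul_of_nonneg_right (by linarith [hcy j0 hj0Ioc]) (qq_nonneg m j0)
          have hqj00 : 0 ≤ qq m j0 := qq_nonneg m j0
          have hqj0h : qq m j0 ≤ 1/2 := qq_le_half m j0 hm3' hj00
          rcases Nat.lt_or_ge j0 2 with hj01 | hj02
          · -- j0 = 1
            have hj0one : j0 = 1 := by omega
            have hq1 : qq m j0 = 1/2 := by rw [hj0one]; exact qq_one m hm3'
            have hj0nem : j0 ≠ m := by omega
            have hajm : a j0 + a m ≥ -(4*ε) := hpa j0 hj0k m hmk hj0nem
            have ham : a m ≤ y m + 4*ε := hup m hmk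
            have hAlb : -(y m) - 8*ε ≤ a j0 := by linarith
            rw [hd] at heval
            rw [hq1] at heval hfj0 ⊢
            have P1 : (0:ℝ) ≤ (a j0 + y m + 8*ε) * qq m istar :=
              mul_nonneg (by linarith) hqistar0
            have P2 : (0:ℝ) ≤ (y istar + 4*ε - a istar) * (1 - qq m istar) :=
              mul_nonneg (by linarith) (by linarith)
            have P3 : (0:ℝ) ≤ ε * qq m istar := mul_nonneg hε hqistar0
            nlinarith [hbound, heval, hfj0, hCge, P1, P2, P3]
          · -- j0 ≥ 2
            have hqj0q : qq m j0 ≤ 1/4 := qq_le_quarter m j0 hm3' hj02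
            rw [hd] at heval
            have P1 : (0:ℝ) ≤ (-(a j0)) * (1 - qq m istar - 2 * qq m j0) :=
              mul_nonneg (by linarith) (by linarith)
            have P2 : (0:ℝ) ≤ (y istar + 4*ε - a istar) * (1 - qq m istar) :=
              mul_nonneg (by linarith) (by linarith)
            have P3 : (0:ℝ) ≤ ε * qq m istar := mul_nonneg hε hqistar0
            have P4 : (0:ℝ) ≤ ε * qq m j0 := mul_nonneg hε hqj00
            have P5 : (0:ℝ) ≤ y m * qq m istar := mul_nonneg hympos.le hqistar0
            nlinarith [hbound, heval, hfj0, hCge, P1, P2, P3, P4, P5]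
      · -- i* > m
        have hys : ¬ (0 < y istar) := by rw [hiplusc istar histar]; omega
        have hys' : y istar ≤ 0 := le_of_not_gt hys
        have haiu : a istar ≤ y istar + 4*ε := hup istar histar
        have hbound : ∑ i ∈ Finset.Ioc 0 m, (-(8*ε)) * qq m i
            ≤ ∑ i ∈ Finset.Ioc 0 m, (y i + a i) * qq m i := by
          refine Finset.sum_le_sum fun i hi => ?_
          have hyi : 0 < y i := hypos i hi
          have hine : i ≠ istar := by
            obtain ⟨_, him⟩ := Finset.mem_Ioc.mp hi; omega
          have := hpa i (hsub hi) istar histar hine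
          exact mul_le_mul_of_nonneg_right (by linarith) (qq_nonneg m i)
        rw [← Finset.mul_sum, qq_sum m hm1, mul_one] at hbound
        linarith

end Stmt2
end

section
/- Let k ≥ 2, ε ≥ 0, and let ŷ, â ∈ ℝ^k satisfy: ŷ_1 ≥ ŷ_2 ≥ … ≥ ŷ_k; ŷ_i + ŷ_j ≥ −4ε and â_i + â_j ≥ −4ε for all i ≠ j; and ŷ_i ≥ â_i − 4ε for all i. If ŷ_i ≤ 0 for every i ≥ 2, then for every i* ∈ {1,…,k}: â_1 + ŷ_1 ≥ â_{i*} − 14ε. -/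
/-!
For `i* = 1` it suffices that `ŷ₁ ≥ -4ε`, which follows from `ŷ₁ + ŷ₂ ≥ -4ε` and
`ŷ₂ ≤ 0`. For `i* ≥ 2`, orthant submodularity and `ŷ_{i*} ≤ 0` give `â_{i*} ≤ 4ε`,
while `â₁ + ŷ₁ ≥ (-4ε - â_{i*}) + (â_{i*} - 4ε) = -8ε` by pairwise monotonicity of `â`
and `ŷ₁ ≥ ŷ_{i*}`.
-/

namespace Stmt3

lemma sub_le_add_of_add_nonpos_partner {ε a y₁ y₂ : ℝ} (hε : 0 ≤ ε)
    (hpair : -(4 * ε) ≤ y₁ + y₂) (hy₂ : y₂ ≤ 0) : a - 14 * ε ≤ a + y₁ := by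
  linarith

lemma sub_le_add_of_nonpos_gain {ε a₁ y₁ aᵢ yᵢ : ℝ} (hε : 0 ≤ ε)
    (hyᵢ : yᵢ ≤ 0) (hord : yᵢ ≤ y₁) (hya : aᵢ - 4 * ε ≤ yᵢ)
    (hpa : -(4 * ε) ≤ a₁ + aᵢ) :
    aᵢ - 14 * ε ≤ a₁ + y₁ := by
  linarith

/-- Case `i⁺ ≤ 1` of the robustness analysis of the unconstrained non-monotone
algorithm: if `ŷ_i ≤ 0` for every `i ≥ 2`, then `â_1 + ŷ_1 ≥ â_{i*} − 14ε`. -/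
theorem stmt3 (k : ℕ) (hk : 2 ≤ k) (ε : ℝ) (hε : 0 ≤ ε) (y a : ℕ → ℝ)
    (hord : ∀ i ∈ Finset.Icc 1 k, ∀ j ∈ Finset.Icc 1 k, i ≤ j → y j ≤ y i)
    (hpy : ∀ i ∈ Finset.Icc 1 k, ∀ j ∈ Finset.Icc 1 k, i ≠ j →
      y i + y j ≥ -(4 * ε))
    (hpa : ∀ i ∈ Finset.Icc 1 k, ∀ j ∈ Finset.Icc 1 k, i ≠ j →
      a i + a j ≥ -(4 * ε))
    (hya : ∀ i ∈ Finset.Icc 1 k, y i ≥ a i - 4 * ε)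
    (hneg : ∀ i ∈ Finset.Icc 1 k, 2 ≤ i → y i ≤ 0)
    (istar : ℕ) (histar : istar ∈ Finset.Icc 1 k) :
    a 1 + y 1 ≥ a istar - 14 * ε := by
  have h1 : 1 ∈ Finset.Icc 1 k := Finset.mem_Icc.mpr ⟨le_rfl, by omega⟩
  have h2 : 2 ∈ Finset.Icc 1 k := Finset.mem_Icc.mpr ⟨by norm_num, hk⟩
  obtain ⟨histar₁, -⟩ := Finset.mem_Icc.mp histar
  rcases histar₁.eq_or_lt with rfl | histar₂
  · exact sub_le_add_of_add_nonpos_partner hε (hpy 1 h1 2 h2 (by norm_num))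
      (hneg 2 h2 le_rfl)
  · exact sub_le_add_of_nonpos_gain hε (hneg istar histar histar₂)
      (hord 1 h1 istar histar histar₁) (hya istar histar) (hpa 1 h1 istar histar histar₂.ne)

end Stmt3
end

section
/- Let k ≥ 2, ε ≥ 0, and let ŷ, â ∈ ℝ^k satisfy: ŷ_1 ≥ ŷ_2 ≥ … ≥ ŷ_k; ŷ_i + ŷ_j ≥ −4ε and â_i + â_j ≥ −4ε for all i ≠ j; and ŷ_i ≥ â_i − 4ε for all i. If ŷ_1 ≥ ŷ_2 > 0 and ŷ_i ≤ 0 for every i ≥ 3, then for every i* ∈ {1,…,k}: (â_1 + ŷ_1)·ŷ_1 + (â_2 + ŷ_2)·ŷ_2 ≥ (â_{i*} − 14ε)·(ŷ_1 + ŷ_2). -/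
/-!
If `i*` is one of the two positive coordinates, say `i* = 1`, then `â₁ ≤ ŷ₁ + 4ε` and
`â₂ ≥ -4ε - â₁` bound the left side below by `(â₁ - 14ε)(ŷ₁ + ŷ₂) + (ŷ₁ - ŷ₂)² + ε(14ŷ₁ + 2ŷ₂)`.
Otherwise `ŷ_{i*} ≤ 0` forces `â_{i*} ≤ 4ε`, hence `â₁, â₂ ≥ -8ε`, and the left side is at least
`-8ε(ŷ₁ + ŷ₂) ≥ (â_{i*} - 14ε)(ŷ₁ + ŷ₂)`.
-/

namespace Stmt4

theorem gain_bound_of_mem_top_pair {ε y₁ y₂ a₁ a₂ : ℝ} (hε : 0 ≤ ε) (hy₁ : 0 ≤ y₁)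
    (hy₂ : 0 ≤ y₂) (ha : a₁ + a₂ ≥ -(4 * ε)) (hya : y₁ ≥ a₁ - 4 * ε) :
    (a₁ + y₁) * y₁ + (a₂ + y₂) * y₂ ≥ (a₁ - 14 * ε) * (y₁ + y₂) := by
  linarith [sq_nonneg (y₁ - y₂), mul_nonneg hε hy₁, mul_nonneg hε hy₂,
    mul_le_mul_of_nonneg_right (ge_iff_le.1 ha) hy₂, mul_le_mul_of_nonneg_right (ge_iff_le.1 hya) hy₂]

theorem gain_bound_of_nonpos_gain {ε y₁ y₂ a₁ a₂ a y : ℝ} (hε : 0 ≤ ε) (hy₁ : 0 ≤ y₁)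
    (hy₂ : 0 ≤ y₂) (ha₁ : a₁ + a ≥ -(4 * ε)) (ha₂ : a₂ + a ≥ -(4 * ε)) (hya : y ≥ a - 4 * ε)
    (hy : y ≤ 0) :
    (a₁ + y₁) * y₁ + (a₂ + y₂) * y₂ ≥ (a - 14 * ε) * (y₁ + y₂) := by
  have ha : a ≤ 4 * ε := by linarith
  have ha₁' : -(8 * ε) ≤ a₁ := by linarith
  have ha₂' : -(8 * ε) ≤ a₂ := by linarith
  linarith [sq_nonneg y₁, sq_nonneg y₂, mul_nonneg hε (add_nonneg hy₁ hy₂),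
    mul_le_mul_of_nonneg_right ha₁' hy₁, mul_le_mul_of_nonneg_right ha₂' hy₂,
    mul_le_mul_of_nonneg_right ha (add_nonneg hy₁ hy₂)]

theorem stmt4_general (k : ℕ) (hk : 2 ≤ k) (ε : ℝ) (hε : 0 ≤ ε) (y a : ℕ → ℝ)
    (hpa : ∀ i ∈ Finset.Icc 1 k, ∀ j ∈ Finset.Icc 1 k, i ≠ j →
      a i + a j ≥ -(4 * ε))
    (hya : ∀ i ∈ Finset.Icc 1 k, y i ≥ a i - 4 * ε)
    (h12 : y 1 ≥ y 2) (h2pos : 0 < y 2)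
    (hneg : ∀ i ∈ Finset.Icc 1 k, 3 ≤ i → y i ≤ 0)
    (istar : ℕ) (histar : istar ∈ Finset.Icc 1 k) :
    (a 1 + y 1) * y 1 + (a 2 + y 2) * y 2 ≥ (a istar - 14 * ε) * (y 1 + y 2) := by
  have h1 : 1 ∈ Finset.Icc 1 k := Finset.mem_Icc.2 ⟨le_rfl, by omega⟩
  have h2 : 2 ∈ Finset.Icc 1 k := Finset.mem_Icc.2 ⟨by omega, hk⟩
  have hy₁ : 0 ≤ y 1 := h2pos.le.trans h12
  obtain rfl | rfl | h3 : istar = 1 ∨ istar = 2 ∨ 3 ≤ istar := by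
    have := (Finset.mem_Icc.1 histar).1; omega
  · exact gain_bound_of_mem_top_pair hε hy₁ h2pos.le (hpa 1 h1 2 h2 (by decide)) (hya 1 h1)
  · rw [add_comm ((a 1 + y 1) * y 1), add_comm (y 1)]
    exact gain_bound_of_mem_top_pair hε h2pos.le hy₁ (hpa 2 h2 1 h1 (by decide)) (hya 2 h2)
  · exact gain_bound_of_nonpos_gain hε hy₁ h2pos.le (hpa 1 h1 istar histar (by omega))
      (hpa 2 h2 istar histar (by omega)) (hya istar histar) (hneg istar histar h3)

/-- Case `i⁺ = 2` of the robustness analysis of the unconstrained non-monotone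
algorithm: if `ŷ_1 ≥ ŷ_2 > 0` and `ŷ_i ≤ 0` for `i ≥ 3`, then
`(â_1 + ŷ_1)ŷ_1 + (â_2 + ŷ_2)ŷ_2 ≥ (â_{i*} − 14ε)(ŷ_1 + ŷ_2)`. -/
theorem stmt4 (k : ℕ) (hk : 2 ≤ k) (ε : ℝ) (hε : 0 ≤ ε) (y a : ℕ → ℝ)
    (hord : ∀ i ∈ Finset.Icc 1 k, ∀ j ∈ Finset.Icc 1 k, i ≤ j → y j ≤ y i)
    (hpy : ∀ i ∈ Finset.Icc 1 k, ∀ j ∈ Finset.Icc 1 k, i ≠ j →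
      y i + y j ≥ -(4 * ε))
    (hpa : ∀ i ∈ Finset.Icc 1 k, ∀ j ∈ Finset.Icc 1 k, i ≠ j →
      a i + a j ≥ -(4 * ε))
    (hya : ∀ i ∈ Finset.Icc 1 k, y i ≥ a i - 4 * ε)
    (h12 : y 1 ≥ y 2) (h2pos : 0 < y 2)
    (hneg : ∀ i ∈ Finset.Icc 1 k, 3 ≤ i → y i ≤ 0)
    (istar : ℕ) (histar : istar ∈ Finset.Icc 1 k) :
    (a 1 + y 1) * y 1 + (a 2 + y 2) * y 2 ≥ (a istar - 14 * ε) * (y 1 + y 2) :=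
  stmt4_general k hk ε hε y a hpa hya h12 h2pos hneg istar histar

end Stmt4
end

section
/- Let k ≥ 3, ε ≥ 0, and let ŷ, â ∈ ℝ^k satisfy: ŷ_1 ≥ ŷ_2 ≥ … ≥ ŷ_k; ŷ_i + ŷ_j ≥ −4ε and â_i + â_j ≥ −4ε for all i ≠ j; and ŷ_i ≥ â_i − 4ε for all i. Suppose m ∈ {3,…,k} satisfies ŷ_m > 0 and ŷ_i ≤ 0 for all i > m. Define p_i = (1/2)^i for 1 ≤ i ≤ m−1, p_m = (1/2)^{m−1}, and p_i = 0 for i > m. Then for every i* ∈ {1,…,k}: Σ_{i=1}^k (ŷ_i + â_i) p_i ≥ â_{i*} − 14ε. -/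
namespace Stmt5

private lemma geo (n : ℕ) : ∑ i ∈ Finset.Icc 1 n, ((1:ℝ)/2)^i = 1 - (1/2)^n := by
  induction n with
  | zero => simp
  | succ n ih =>
    rw [Finset.sum_Icc_succ_top (by omega : 1 ≤ n+1), ih]
    ring

/-- Case `i⁺ ≥ 3` of the robustness analysis of the unconstrained non-monotone
algorithm, with geometric probability weights `p`: for `m = i⁺ ∈ {3,…,k}`,
`Σ_{i=1}^k (ŷ_i + â_i) p_i ≥ â_{i*} − 14ε`. -/
theorem stmt5 (k : ℕ) (hk : 3 ≤ k) (ε : ℝ) (hε : 0 ≤ ε) (y a : ℕ → ℝ)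
    (hord : ∀ i ∈ Finset.Icc 1 k, ∀ j ∈ Finset.Icc 1 k, i ≤ j → y j ≤ y i)
    (hpy : ∀ i ∈ Finset.Icc 1 k, ∀ j ∈ Finset.Icc 1 k, i ≠ j →
      y i + y j ≥ -(4 * ε))
    (hpa : ∀ i ∈ Finset.Icc 1 k, ∀ j ∈ Finset.Icc 1 k, i ≠ j →
      a i + a j ≥ -(4 * ε))
    (hya : ∀ i ∈ Finset.Icc 1 k, y i ≥ a i - 4 * ε)
    (m : ℕ) (hm : m ∈ Finset.Icc 3 k)
    (hym : 0 < y m)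
    (hneg : ∀ i ∈ Finset.Icc 1 k, m < i → y i ≤ 0)
    (p : ℕ → ℝ)
    (hp : ∀ i ∈ Finset.Icc 1 k, p i =
      if i ≤ m - 1 then (1/2 : ℝ)^i
      else if i = m then (1/2 : ℝ)^(m - 1) else 0)
    (istar : ℕ) (histar : istar ∈ Finset.Icc 1 k) :
    ∑ i ∈ Finset.Icc 1 k, (y i + a i) * p i ≥ a istar - 14 * ε := by
  have hm3 : 3 ≤ m ∧ m ≤ k := Finset.mem_Icc.mp hm
  have hmI : m ∈ Finset.Icc 1 k := Finset.mem_Icc.mpr ⟨by omega, hm3.2⟩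
  have histar' : 1 ≤ istar ∧ istar ≤ k := Finset.mem_Icc.mp histar
  -- basic facts about y
  have hy0 : ∀ i ∈ Finset.Icc 1 k, i ≤ m → 0 ≤ y i := by
    intro i hi him
    exact le_trans (le_of_lt hym) (hord i hi m hmI him)
  -- basic facts about p
  have hp0 : ∀ i ∈ Finset.Icc 1 k, 0 ≤ p i := by
    intro i hi
    rw [hp i hi]
    split_ifs <;> positivity
  have hpz : ∀ i ∈ Finset.Icc 1 k, m < i → p i = 0 := by
    intro i hi hmi
    rw [hp i hi, if_neg (by omega), if_neg (by omega)]
  have hphalf : ∀ i ∈ Finset.Icc 1 k, p i ≤ 1/2 := by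
    intro i hi
    have hi' := Finset.mem_Icc.mp hi
    rw [hp i hi]
    split_ifs with h1 h2
    · calc ((1:ℝ)/2)^i ≤ ((1:ℝ)/2)^1 :=
        pow_le_pow_of_le_one (by norm_num) (by norm_num) (by omega)
      _ = 1/2 := by norm_num
    · calc ((1:ℝ)/2)^(m-1) ≤ ((1:ℝ)/2)^1 :=
        pow_le_pow_of_le_one (by norm_num) (by norm_num) (by omega)
      _ = 1/2 := by norm_num
    · norm_num
  have hpq : ∀ i ∈ Finset.Icc 1 k, 2 ≤ i → p i ≤ 1/4 := by
    intro i hi h2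
    rw [hp i hi]
    split_ifs with h1 hh2
    · calc ((1:ℝ)/2)^i ≤ ((1:ℝ)/2)^2 :=
        pow_le_pow_of_le_one (by norm_num) (by norm_num) (by omega)
      _ = 1/4 := by norm_num
    · calc ((1:ℝ)/2)^(m-1) ≤ ((1:ℝ)/2)^2 :=
        pow_le_pow_of_le_one (by norm_num) (by norm_num) (by omega)
      _ = 1/4 := by norm_num
    · norm_num
  -- splitting sums over Icc
  have key_split : ∀ (f : ℕ → ℝ) (b c : ℕ), b ≤ c →
      ∑ i ∈ Finset.Icc 1 b, f i + ∑ i ∈ Finset.Icc (b+1) c, f i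
        = ∑ i ∈ Finset.Icc 1 c, f i := by
    intro f b c hbc
    rw [show (1:ℕ) = 0 + 1 from rfl, Finset.Icc_add_one_left_eq_Ioc, Finset.Icc_add_one_left_eq_Ioc,
      show Finset.Icc (b + (0 + 1)) c = Finset.Ioc b c from Finset.Icc_add_one_left_eq_Ioc b c]
    exact Finset.sum_Ioc_consecutive f (Nat.zero_le b) hbc
  have hSsum : ∀ j, 1 ≤ j → j ≤ m - 1 →
      ∑ i ∈ Finset.Icc 1 j, p i = 1 - (1/2:ℝ)^j := by
    intro j hj1 hjm
    rw [show ∑ i ∈ Finset.Icc 1 j, p i = ∑ i ∈ Finset.Icc 1 j, ((1:ℝ)/2)^i from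
      Finset.sum_congr rfl ?_, geo]
    intro i hi
    have hi' := Finset.mem_Icc.mp hi
    rw [hp i (Finset.mem_Icc.mpr ⟨hi'.1, by omega⟩), if_pos (by omega)]
  have hSm : ∑ i ∈ Finset.Icc 1 m, p i = 1 := by
    have hm1 : m - 1 + 1 = m := by omega
    rw [← hm1, Finset.sum_Icc_succ_top (by omega : 1 ≤ m - 1 + 1),
      hSsum (m-1) (by omega) (le_refl _), hm1,
      hp m hmI, if_neg (by omega), if_pos rfl]
    ring
  have hsum1 : ∑ i ∈ Finset.Icc 1 k, p i = 1 := by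
    have h := key_split p m k hm3.2
    have hz : ∑ i ∈ Finset.Icc (m+1) k, p i = 0 := by
      apply Finset.sum_eq_zero
      intro i hi
      have hi' := Finset.mem_Icc.mp hi
      exact hpz i (Finset.mem_Icc.mpr ⟨by omega, hi'.2⟩) (by omega)
    rw [← h, hSm, hz]
    ring
  -- the tail sum after istar
  set Tp := ∑ i ∈ Finset.Icc (istar+1) k, p i with hTp
  have hST : ∑ i ∈ Finset.Icc 1 istar, p i + Tp = 1 := by
    rw [hTp, key_split p istar k histar'.2, hsum1]
  have hTp0 : 0 ≤ Tp := by
    apply Finset.sum_nonneg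
    intro i hi
    have hi' := Finset.mem_Icc.mp hi
    exact hp0 i (Finset.mem_Icc.mpr ⟨by omega, hi'.2⟩)
  have hu : Tp ≤ p istar ∧ p istar ≤ Tp + 1/4 := by
    rcases le_or_gt istar (m-1) with hc | hc
    · have hS := hSsum istar histar'.1 hc
      have hpi : p istar = (1/2:ℝ)^istar := by
        rw [hp istar histar, if_pos hc]
      have : Tp = (1/2:ℝ)^istar := by linarith [hST, hS]
      constructor <;> [linarith [this, hpi]; nlinarith [this, hpi]]
    · have hS : ∑ i ∈ Finset.Icc 1 istar, p i = 1 := by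
        have h := key_split p m istar (by omega)
        have hz : ∑ i ∈ Finset.Icc (m+1) istar, p i = 0 := by
          apply Finset.sum_eq_zero
          intro i hi
          have hi' := Finset.mem_Icc.mp hi
          exact hpz i (Finset.mem_Icc.mpr ⟨by omega, by omega⟩) (by omega)
        rw [← h, hSm, hz]; ring
      have hT0 : Tp = 0 := by linarith [hST, hS]
      have hq : p istar ≤ 1/4 := hpq istar histar (by omega)
      exact ⟨by rw [hT0]; exact hp0 istar histar, by linarith⟩
  -- generic machinery: termwise lower bound by an indicator-affine function
  have main : ∀ (Bc c1 c2 c3 : ℝ) (n' : ℕ), n' ∈ Finset.Icc 1 k →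
      (∀ i ∈ Finset.Icc 1 k, p i ≠ 0 →
        Bc + c1 * (if i = istar then (1:ℝ) else 0)
           + c2 * (if i = n' then (1:ℝ) else 0)
           + c3 * (if istar < i then (1:ℝ) else 0)
          ≤ y i + a i - (a istar - 14 * ε)) →
      0 ≤ Bc + c1 * p istar + c2 * p n' + c3 * Tp →
      ∑ i ∈ Finset.Icc 1 k, (y i + a i) * p i ≥ a istar - 14 * ε := by
    intro Bc c1 c2 c3 n' hn' hterm hnum
    have e1 : ∑ i ∈ Finset.Icc 1 k, (if i = istar then (1:ℝ) else 0) * p i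
        = p istar := by
      simp only [ite_mul, one_mul, zero_mul]
      rw [Finset.sum_ite_eq' (Finset.Icc 1 k) istar p, if_pos histar]
    have e2 : ∑ i ∈ Finset.Icc 1 k, (if i = n' then (1:ℝ) else 0) * p i
        = p n' := by
      simp only [ite_mul, one_mul, zero_mul]
      rw [Finset.sum_ite_eq' (Finset.Icc 1 k) n' p, if_pos hn']
    have e3 : ∑ i ∈ Finset.Icc 1 k, (if istar < i then (1:ℝ) else 0) * p i
        = Tp := by
      simp only [ite_mul, one_mul, zero_mul]
      rw [← Finset.sum_filter]
      rw [hTp]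
      apply Finset.sum_congr _ (fun i _ => rfl)
      ext i
      simp only [Finset.mem_filter, Finset.mem_Icc]
      omega
    have hle : ∑ i ∈ Finset.Icc 1 k,
        (Bc + c1 * (if i = istar then (1:ℝ) else 0)
            + c2 * (if i = n' then (1:ℝ) else 0)
            + c3 * (if istar < i then (1:ℝ) else 0)) * p i
        ≤ ∑ i ∈ Finset.Icc 1 k, (y i + a i - (a istar - 14 * ε)) * p i := by
      apply Finset.sum_le_sum
      intro i hi
      by_cases hpi : p i = 0
      · rw [hpi]; simp
      · exact mul_le_mul_of_nonneg_right (hterm i hi hpi) (hp0 i hi)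
    have lhs_eval : ∑ i ∈ Finset.Icc 1 k,
        (Bc + c1 * (if i = istar then (1:ℝ) else 0)
            + c2 * (if i = n' then (1:ℝ) else 0)
            + c3 * (if istar < i then (1:ℝ) else 0)) * p i
        = Bc * (∑ i ∈ Finset.Icc 1 k, p i)
          + c1 * p istar + c2 * p n' + c3 * Tp := by
      rw [← e1, ← e2, ← e3, Finset.mul_sum, Finset.mul_sum, Finset.mul_sum,
        Finset.mul_sum, ← Finset.sum_add_distrib, ← Finset.sum_add_distrib,
        ← Finset.sum_add_distrib]
      apply Finset.sum_congr rfl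
      intro i _
      ring
    have rhs_eval : ∑ i ∈ Finset.Icc 1 k, (y i + a i - (a istar - 14 * ε)) * p i
        = ∑ i ∈ Finset.Icc 1 k, (y i + a i) * p i
          - (a istar - 14 * ε) * (∑ i ∈ Finset.Icc 1 k, p i) := by
      rw [Finset.mul_sum, ← Finset.sum_sub_distrib]
      apply Finset.sum_congr rfl
      intro i _
      ring
    rw [lhs_eval, rhs_eval, hsum1] at hle
    rw [hsum1] at *
    linarith
  -- pick n minimizing a on [1,k]
  obtain ⟨n, hnI, hnmin⟩ := Finset.exists_min_image (Finset.Icc 1 k) a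
    ⟨1, Finset.mem_Icc.mpr ⟨le_refl 1, by omega⟩⟩
  have hnI' := Finset.mem_Icc.mp hnI
  rcases le_or_gt (a istar) (a n) with hcase1 | hcase2
  · -- Case 1 : a istar is (essentially) the minimum; everything is ≥ a istar
    apply main 0 0 0 0 n hnI _ (by norm_num)
    intro i hi hpi
    have him : i ≤ m := by
      by_contra h
      exact hpi (hpz i hi (by omega))
    have hyi : 0 ≤ y i := hy0 i hi him
    have hai : a istar ≤ a i := le_trans hcase1 (hnmin i hi)
    have : (0:ℝ) ≤ y i + a i - (a istar - 14 * ε) := by linarith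
    simpa using this
  · -- Case 2 : a n < a istar, so n ≠ istar
    have hnistar : n ≠ istar := by
      intro h; rw [h] at hcase2; exact lt_irrefl _ hcase2
    have hts : -(a n) - 4*ε ≤ a istar := by
      have := hpa n hnI istar histar hnistar
      linarith
    have hsa : ∀ j ∈ Finset.Icc 1 k, j ≠ n → -(a n) - 4*ε ≤ a j := by
      intro j hj hjn
      have := hpa j hj n hnI hjn
      linarith
    have hsy : ∀ j ∈ Finset.Icc 1 k, j ≠ n → -(a n) - 8*ε ≤ y j := by
      intro j hj hjn
      have h1 := hsa j hj hjn
      have h2 := hya j hj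
      linarith
    rcases le_or_gt (-(a n)) (8*ε) with hs8 | hs8
    · -- subcase 2a : min is not too negative
      rcases le_or_gt (a istar) (6*ε) with ht6 | ht6
      · -- 2a-i : small a istar, termwise
        apply main 0 0 0 0 n hnI _ (by norm_num)
        intro i hi hpi
        have him : i ≤ m := by
          by_contra h
          exact hpi (hpz i hi (by omega))
        have hyi : 0 ≤ y i := hy0 i hi him
        have hai : a n ≤ a i := hnmin i hi
        have : (0:ℝ) ≤ y i + a i - (a istar - 14 * ε) := by linarith
        simpa using this
      · -- 2a-ii
        apply main (2*ε) (a istar + 8*ε) 0 (4*ε - a istar) n hnI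
        · intro i hi hpi
          have him : i ≤ m := by
            by_contra h
            exact hpi (hpz i hi (by omega))
          have hyi : 0 ≤ y i := hy0 i hi him
          have hai : a n ≤ a i := hnmin i hi
          simp only [zero_mul, add_zero]
          rcases eq_or_ne i istar with h1 | h1
          · rw [h1]
            have hyistar := hya istar histar
            rw [if_pos rfl, if_neg (lt_irrefl istar)]
            linarith
          · rw [if_neg h1]
            rcases le_or_gt i istar with hle | hgt
            · have hyis : y istar ≤ y i := hord i hi istar histar hle
              have hyistar := hya istar histar
              rw [if_neg (not_lt.mpr hle)]
              linarith
            · rw [if_pos hgt]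
              linarith
        · have h1 := hu.1
          have h2 := hTp0
          nlinarith [mul_nonneg (show (0:ℝ) ≤ a istar + 8*ε by linarith)
            (show (0:ℝ) ≤ p istar - Tp by linarith)]
    · -- subcase 2b : a n < -8ε
      have htpos : 4*ε < a istar := by linarith
      rcases le_or_gt n istar with hni | hni
      · -- 2b-i : n < istar
        have hnlt : n < istar := lt_of_le_of_ne hni hnistar
        apply main (-(a n) + 6*ε) (a istar + 4*ε + a n) (4*ε + 2*(a n))
          (-(a n) - 4*ε - a istar) n hnI
        · intro i hi hpi
          have him : i ≤ m := by
            by_contra h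
            exact hpi (hpz i hi (by omega))
          have hyi : 0 ≤ y i := hy0 i hi him
          rcases eq_or_ne i istar with h1 | h1
          · rw [h1]
            have hyistar := hya istar histar
            rw [if_pos rfl, if_neg (Ne.symm hnistar), if_neg (lt_irrefl istar)]
            linarith
          · rw [if_neg h1]
            rcases eq_or_ne i n with h2 | h2
            · rw [h2]
              have hyn : y istar ≤ y n := hord n hnI istar histar hni
              have hyistar := hya istar histar
              rw [if_pos rfl, if_neg (not_lt.mpr hni)]
              linarith
            · rw [if_neg h2]
              have hain := hsa i hi h2
              rcases le_or_gt i istar with hle | hgt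
              · have hyis : y istar ≤ y i := hord i hi istar histar hle
                have hyistar := hya istar histar
                rw [if_neg (not_lt.mpr hle)]
                linarith
              · rw [if_pos hgt]
                have hyin := hsy i hi h2
                linarith
        · have h1 := hu.1
          have hpn2 := hphalf n hnI
          have hpn0 := hp0 n hnI
          nlinarith [mul_nonneg (show (0:ℝ) ≤ a istar + 4*ε + a n by linarith)
            (show (0:ℝ) ≤ p istar - Tp by linarith),
            mul_le_mul_of_nonneg_left hpn2 (show (0:ℝ) ≤ -(4*ε + 2*(a n)) by linarith)]
      · -- 2b-ii : istar < n
        have hn2 : 2 ≤ n := by omega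
        apply main (-(a n) + 6*ε) (a istar + 4*ε + a n) (12*ε + 3*(a n))
          (-(a n) - 4*ε - a istar) n hnI
        · intro i hi hpi
          have him : i ≤ m := by
            by_contra h
            exact hpi (hpz i hi (by omega))
          have hyi : 0 ≤ y i := hy0 i hi him
          rcases eq_or_ne i istar with h1 | h1
          · rw [h1]
            have hyistar := hya istar histar
            rw [if_pos rfl, if_neg (Ne.symm hnistar), if_neg (lt_irrefl istar)]
            linarith
          · rw [if_neg h1]
            rcases eq_or_ne i n with h2 | h2
            · have hyn : 0 ≤ y n := h2 ▸ hyi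
              rw [h2, if_pos rfl, if_pos hni]
              linarith
            · rw [if_neg h2]
              have hain := hsa i hi h2
              rcases le_or_gt i istar with hle | hgt
              · have hyis : y istar ≤ y i := hord i hi istar histar hle
                have hyistar := hya istar histar
                rw [if_neg (not_lt.mpr hle)]
                linarith
              · rw [if_pos hgt]
                have hyin := hsy i hi h2
                linarith
        · have h1 := hu.1
          have hpn2 := hpq n hnI hn2
          have hpn0 := hp0 n hnI
          nlinarith [mul_nonneg (show (0:ℝ) ≤ a istar + 4*ε + a n by linarith)
            (show (0:ℝ) ≤ p istar - Tp by linarith),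
            mul_le_mul_of_nonneg_left hpn2 (show (0:ℝ) ≤ -(12*ε + 3*(a n)) by linarith)]

end Stmt5
end

section
/- Let k ≥ 2, t = k − 1, ε ≥ 0, and let ŷ, â ∈ ℝ^k satisfy: ŷ_i ≥ 0 for all i; â_i ≥ −2ε for all i; and ŷ_i ≥ â_i − 4ε for all i. Then for every i* ∈ {1,…,k}: Σ_{i=1}^k (â_{i*} − â_i)·ŷ_i^t ≤ (1 − 1/k)·Σ_{i=1}^k ŷ_i^{t+1} + 10ε·Σ_{i=1}^k ŷ_i^t. -/
namespace Stmt7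

lemma amgm (n : ℕ) (x y : ℝ) (hx : 0 ≤ x) (hy : 0 ≤ y) :
    (n + 1 : ℝ) * (x * y ^ n) ≤ x ^ (n + 1) + n * y ^ (n + 1) := by
  induction n with
  | zero => simp
  | succ n ih =>
    have h1 : (n + 1 : ℝ) * (x * y ^ n) * y ≤ (x ^ (n + 1) + n * y ^ (n + 1)) * y :=
      mul_le_mul_of_nonneg_right ih hy
    have h2 : 0 ≤ (x ^ (n + 1) - y ^ (n + 1)) * (x - y) := by
      rcases le_total x y with h | h
      · nlinarith [pow_le_pow_left₀ hx h (n + 1)]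
      · nlinarith [pow_le_pow_left₀ hy h (n + 1)]
    push_cast
    ring_nf at h1 h2 ⊢
    nlinarith [h1, h2]

/-- Case `β > 0` of the robustness analysis of the modified unconstrained
monotone algorithm, with `t = k − 1`:
`Σ_i (â_{i*} − â_i)·ŷ_i^t ≤ (1 − 1/k)·Σ_i ŷ_i^{t+1} + 10ε·Σ_i ŷ_i^t`. -/
theorem stmt7 (k t : ℕ) (hk : 2 ≤ k) (ht : t = k - 1)
    (ε : ℝ) (hε : 0 ≤ ε) (y a : ℕ → ℝ)
    (hy : ∀ i ∈ Finset.Icc 1 k, 0 ≤ y i)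
    (ha : ∀ i ∈ Finset.Icc 1 k, a i ≥ -(2 * ε))
    (hya : ∀ i ∈ Finset.Icc 1 k, y i ≥ a i - 4 * ε)
    (istar : ℕ) (histar : istar ∈ Finset.Icc 1 k) :
    ∑ i ∈ Finset.Icc 1 k, (a istar - a i) * y i ^ t ≤
      (1 - 1 / (k : ℝ)) * ∑ i ∈ Finset.Icc 1 k, y i ^ (t + 1) +
        10 * ε * ∑ i ∈ Finset.Icc 1 k, y i ^ t := by
  set S := Finset.Icc 1 k with hS
  have hkt : k = t + 1 := by omega
  have hk0 : (0 : ℝ) < k := by positivity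
  have hyi : 0 ≤ y istar := hy istar histar
  have hcard : S.card = k := by simp [hS]
  set S' := S.erase istar with hS'
  have hcard' : S'.card = t := by
    rw [hS', Finset.card_erase_of_mem histar, hcard]; omega
  have htR : (t : ℝ) = (k : ℝ) - 1 := by
    have : (k : ℝ) = (t : ℝ) + 1 := by exact_mod_cast hkt
    linarith
  -- nonnegativity of the power sums
  have hpow : ∀ i ∈ S, 0 ≤ y i ^ t := fun i hi => pow_nonneg (hy i hi) t
  have hpow1 : ∀ i ∈ S, 0 ≤ y i ^ (t + 1) := fun i hi => pow_nonneg (hy i hi) (t + 1)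
  have hsumS : 0 ≤ ∑ i ∈ S, y i ^ t := Finset.sum_nonneg hpow
  have hsumS' : ∑ i ∈ S', y i ^ t ≤ ∑ i ∈ S, y i ^ t :=
    Finset.sum_le_sum_of_subset_of_nonneg (Finset.erase_subset _ _) (fun i hi _ => hpow i hi)
  have hsumS'0 : 0 ≤ ∑ i ∈ S', y i ^ t :=
    Finset.sum_nonneg fun i hi => hpow i (Finset.mem_of_mem_erase hi)
  -- Step 1: drop the istar term
  have step1 : ∑ i ∈ S, (a istar - a i) * y i ^ t
      = ∑ i ∈ S', (a istar - a i) * y i ^ t := by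
    rw [← Finset.add_sum_erase S _ histar]
    simp [hS']
  -- Step 2: pointwise bound on the coefficient
  have step2 : ∑ i ∈ S', (a istar - a i) * y i ^ t
      ≤ ∑ i ∈ S', (y istar + 6 * ε) * y i ^ t := by
    apply Finset.sum_le_sum
    intro i hi
    have hiS : i ∈ S := Finset.mem_of_mem_erase hi
    have h1 := ha i hiS
    have h2 := hya istar histar
    exact mul_le_mul_of_nonneg_right (by linarith) (hpow i hiS)
  -- Step 3: the AM-GM key inequality
  have key : (k : ℝ) * (y istar * ∑ i ∈ S', y i ^ t)
      ≤ (t : ℝ) * ∑ i ∈ S, y i ^ (t + 1) := by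
    have h1 : (k : ℝ) * (y istar * ∑ i ∈ S', y i ^ t)
        = ∑ i ∈ S', ((t : ℝ) + 1) * (y istar * y i ^ t) := by
      rw [Finset.mul_sum, Finset.mul_sum]
      apply Finset.sum_congr rfl
      intro i _
      have : (k : ℝ) = (t : ℝ) + 1 := by exact_mod_cast hkt
      rw [this]
    have h2 : ∑ i ∈ S', ((t : ℝ) + 1) * (y istar * y i ^ t)
        ≤ ∑ i ∈ S', (y istar ^ (t + 1) + (t : ℝ) * y i ^ (t + 1)) := by
      apply Finset.sum_le_sum
      intro i hi
      exact amgm t (y istar) (y i) hyi (hy i (Finset.mem_of_mem_erase hi))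
    have h3 : ∑ i ∈ S', (y istar ^ (t + 1) + (t : ℝ) * y i ^ (t + 1))
        = (t : ℝ) * ∑ i ∈ S, y i ^ (t + 1) := by
      rw [Finset.sum_add_distrib, Finset.sum_const, hcard', ← Finset.mul_sum,
        ← Finset.add_sum_erase S _ histar]
      push_cast
      ring
    linarith
  have key2 : y istar * ∑ i ∈ S', y i ^ t
      ≤ (1 - 1 / (k : ℝ)) * ∑ i ∈ S, y i ^ (t + 1) := by
    have h : (1 - 1 / (k : ℝ)) = (t : ℝ) / k := by
      field_simp
      linarith
    rw [h, div_mul_eq_mul_div, le_div_iff₀ hk0]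
    nlinarith [key]
  -- combine
  have step3 : ∑ i ∈ S', (y istar + 6 * ε) * y i ^ t
      = y istar * ∑ i ∈ S', y i ^ t + 6 * ε * ∑ i ∈ S', y i ^ t := by
    rw [Finset.mul_sum, Finset.mul_sum, ← Finset.sum_add_distrib]
    apply Finset.sum_congr rfl
    intro i _
    ring
  have heps : 6 * ε * ∑ i ∈ S', y i ^ t ≤ 10 * ε * ∑ i ∈ S, y i ^ t := by
    nlinarith [hsumS', hsumS'0, hsumS]
  calc ∑ i ∈ S, (a istar - a i) * y i ^ t
      = ∑ i ∈ S', (a istar - a i) * y i ^ t := step1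
    _ ≤ ∑ i ∈ S', (y istar + 6 * ε) * y i ^ t := step2
    _ = y istar * ∑ i ∈ S', y i ^ t + 6 * ε * ∑ i ∈ S', y i ^ t := step3
    _ ≤ (1 - 1 / (k : ℝ)) * ∑ i ∈ S, y i ^ (t + 1) + 10 * ε * ∑ i ∈ S, y i ^ t := by
        linarith [key2, heps]

end Stmt7
end

section
/- Let k ≥ 2, t = k − 1, and let y_1, …, y_k be nonnegative real numbers. Then for every j ∈ {1,…,k}: y_j · Σ_{i ≠ j} y_i^t ≤ (1 − 1/k) · Σ_{i=1}^k y_i^{t+1}. -/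
/-!
Young's inequality `a * b ^ t ≤ a ^ (t + 1) / (t + 1) + t / (t + 1) * b ^ (t + 1)`, applied with
`a = y_j` to each of the `t` terms of the sum over `i ≠ j`, yields `t` copies of `y_j ^ (t + 1) / (t + 1)`,
which together with the weight `t / (t + 1)` on the other terms complete the full sum, with coefficient
`t / (t + 1) = 1 - 1 / k`.
-/

namespace Stmt8

open Finset

lemma mul_pow_le_add_weighted_pow (t : ℕ) {a b : ℝ} (ha : 0 ≤ a) (hb : 0 ≤ b) :
    a * b ^ t ≤ a ^ (t + 1) / (t + 1) + t / (t + 1) * b ^ (t + 1) := by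
  have ht : (0 : ℝ) < t + 1 := by positivity
  have hw : 1 / ((t : ℝ) + 1) + t / (t + 1) = 1 := by
    rw [← add_div, add_comm, div_self ht.ne']
  have amgm := Real.geom_mean_le_arith_mean2_weighted (by positivity) (by positivity)
    (pow_nonneg ha (t + 1)) (pow_nonneg hb (t + 1)) hw
  have ha' : (a ^ (t + 1)) ^ (1 / ((t : ℝ) + 1)) = a := by
    rw [← Real.rpow_natCast, ← Real.rpow_mul ha]
    push_cast
    rw [mul_one_div_cancel ht.ne', Real.rpow_one]
  have hb' : (b ^ (t + 1)) ^ ((t : ℝ) / (t + 1)) = b ^ t := by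
    rw [← Real.rpow_natCast, ← Real.rpow_mul hb]
    push_cast
    rw [mul_div_cancel₀ _ ht.ne', Real.rpow_natCast]
  rwa [ha', hb', one_div_mul_eq_div] at amgm

theorem mul_sum_erase_pow_le {ι : Type*} [DecidableEq ι] {s : Finset ι} {f : ι → ℝ}
    (hf : ∀ i ∈ s, 0 ≤ f i) {j : ι} (hj : j ∈ s) {t : ℕ} (hs : #s = t + 1) :
    f j * ∑ i ∈ s.erase j, f i ^ t ≤ t / (t + 1) * ∑ i ∈ s, f i ^ (t + 1) := by
  have hcard : #(s.erase j) = t := by rw [card_erase_of_mem hj, hs, Nat.add_sub_cancel]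
  calc f j * ∑ i ∈ s.erase j, f i ^ t
      = ∑ i ∈ s.erase j, f j * f i ^ t := mul_sum _ _ _
    _ ≤ ∑ i ∈ s.erase j, (f j ^ (t + 1) / (t + 1) + t / (t + 1) * f i ^ (t + 1)) :=
        sum_le_sum fun i hi ↦
          mul_pow_le_add_weighted_pow t (hf j hj) (hf i (mem_of_mem_erase hi))
    _ = t * (f j ^ (t + 1) / (t + 1)) + t / (t + 1) * ∑ i ∈ s.erase j, f i ^ (t + 1) := by
        rw [sum_add_distrib, sum_const, hcard, nsmul_eq_mul, mul_sum]
    _ = t / (t + 1) * ∑ i ∈ s, f i ^ (t + 1) := by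
        rw [← add_sum_erase s _ hj]
        ring

theorem stmt8_general (k t : ℕ) (ht : t = k - 1) (y : ℕ → ℝ)
    (hy : ∀ i ∈ Finset.Icc 1 k, 0 ≤ y i)
    (j : ℕ) (hj : j ∈ Finset.Icc 1 k) :
    y j * ∑ i ∈ (Finset.Icc 1 k).erase j, y i ^ t ≤
      (1 - 1 / (k : ℝ)) * ∑ i ∈ Finset.Icc 1 k, y i ^ (t + 1) := by
  have hk : k = t + 1 := by grind
  have hcard : #(Icc 1 k) = t + 1 := by rw [Nat.card_Icc, Nat.add_sub_cancel, hk]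
  have hcoef : (1 - 1 / (k : ℝ)) = t / (t + 1) := by
    rw [hk, Nat.cast_succ]
    field_simp
    ring
  rw [hcoef]
  exact mul_sum_erase_pow_le hy hj hcard

/-- Key analytic inequality (weighted AM–GM + Hölder) for the randomized
algorithm for unconstrained monotone `k`-submodular maximization: for
nonnegative `y_1,…,y_k` and `t = k − 1`,
`y_j · Σ_{i ≠ j} y_i^t ≤ (1 − 1/k) · Σ_{i=1}^k y_i^{t+1}`. -/
theorem stmt8 (k t : ℕ) (hk : 2 ≤ k) (ht : t = k - 1) (y : ℕ → ℝ)
    (hy : ∀ i ∈ Finset.Icc 1 k, 0 ≤ y i)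
    (j : ℕ) (hj : j ∈ Finset.Icc 1 k) :
    y j * ∑ i ∈ (Finset.Icc 1 k).erase j, y i ^ t ≤
      (1 - 1 / (k : ℝ)) * ∑ i ∈ Finset.Icc 1 k, y i ^ (t + 1) :=
  stmt8_general k t ht y hy j hj

end Stmt8
end
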